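/- Let μ be a probability measure with finite entropy H(μ) < ∞ on a countable discrete group G. Then the asymptotic entropy vanishes, h(G,μ) = 0, if and only if ‖gμ^{*n} − μ^{*(n+1)}‖ → 0 as n → ∞ for every g in the support of μ. -/
import Mathlib


open Filter Topology
open scoped Classical

/-- A probability measure on a countable discrete group `G`:
a nonnegative function summing to `1`. -/
def IsProbMeasure {G : Type*} (μ : G → ℝ) : Prop :=
  (∀ g, 0 ≤ μ g) ∧ HasSum μ 1

/-- Convolution of two measures on a discrete group: `(μ*ν)(g) = ∑_h μ(h) ν(h⁻¹g)`. -/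
noncomputable def conv {G : Type*} [Group G] (μ ν : G → ℝ) : G → ℝ :=
  fun g => ∑' h, μ h * ν (h⁻¹ * g)

/-- Convolution powers of a measure, with `μ^{*0} = δ_e`. -/
noncomputable def convPow {G : Type*} [Group G] (μ : G → ℝ) : ℕ → G → ℝ
  | 0 => fun g => if g = 1 then 1 else 0
  | n + 1 => conv (convPow μ n) μ

/-- The entropy `H(μ) = ∑_g −μ(g) log μ(g) ∈ [0,∞]` of a probability measure on a
countable discrete group. -/
noncomputable def entropy {G : Type*} (μ : G → ℝ) : ENNReal :=
  ∑' g, ENNReal.ofReal (-(μ g * Real.log (μ g)))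

set_option linter.unusedSectionVars false
set_option maxHeartbeats 1000000

section probBasic
variable {G : Type*} [Group G]
lemma IsProbMeasure.nonneg {μ : G → ℝ} (h : IsProbMeasure μ) (g : G) : 0 ≤ μ g := h.1 g
lemma IsProbMeasure.summable {μ : G → ℝ} (h : IsProbMeasure μ) : Summable μ := h.2.summable
lemma IsProbMeasure.tsum_eq {μ : G → ℝ} (h : IsProbMeasure μ) : ∑' g, μ g = 1 := h.2.tsum_eq
lemma IsProbMeasure.le_one {μ : G → ℝ} (h : IsProbMeasure μ) (g : G) : μ g ≤ 1 :=
  le_hasSum h.2 g fun j _ => h.1 j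
end probBasic

namespace KV

/-- Fubini for iterated nonneg real tsums. -/
lemma tsum_swap {α β : Type*} {f : α → β → ℝ} (h0 : ∀ a b, 0 ≤ f a b)
    (h1 : ∀ a, Summable (f a)) (h2 : Summable fun a => ∑' b, f a b) :
    (∀ b, Summable fun a => f a b) ∧ (Summable fun b => ∑' a, f a b) ∧
      (∑' b, ∑' a, f a b) = (∑' a, ∑' b, f a b) := by
  have hu : Summable (Function.uncurry f) :=
    (summable_prod_of_nonneg (fun p => h0 p.1 p.2)).2 ⟨h1, h2⟩
  have hswap : Summable (fun p : β × α => f p.2 p.1) := by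
    have := (Equiv.prodComm β α).summable_iff (f := Function.uncurry f)
    exact this.2 hu
  have hcomp := (summable_prod_of_nonneg (f := fun p : β × α => f p.2 p.1)
    (fun p => h0 p.2 p.1)).1 hswap
  exact ⟨hcomp.1, hcomp.2, Summable.tsum_comm' hu h1 hcomp.1⟩

variable {G : Type*} [Group G]

lemma reindex_tsum (k : G) (f : G → ℝ) : ∑' h, f (k * h) = ∑' h, f h :=
  (Equiv.mulLeft k).tsum_eq f

lemma reindex_summable (k : G) {f : G → ℝ} (hf : Summable f) :
    Summable fun h => f (k * h) :=
  ((Equiv.mulLeft k).summable_iff (f := f)).2 hf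

lemma IsProbMeasure.translate {μ : G → ℝ} (h : IsProbMeasure μ) (k : G) :
    IsProbMeasure fun g => μ (k * g) := by
  refine ⟨fun g => h.1 _, (Summable.hasSum_iff ?_).2 ?_⟩
  · exact reindex_summable k h.summable
  · rw [reindex_tsum k μ, h.tsum_eq]

lemma conv_isProb {μ ν : G → ℝ} (hμ : IsProbMeasure μ) (hν : IsProbMeasure ν) :
    IsProbMeasure (conv μ ν) := by
  have h0 : ∀ a b : G, 0 ≤ μ a * ν (a⁻¹ * b) := fun a b =>
    mul_nonneg (hμ.1 a) (hν.1 _)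
  have h1 : ∀ a : G, Summable fun b => μ a * ν (a⁻¹ * b) := fun a =>
    (reindex_summable a⁻¹ hν.summable).mul_left (μ a)
  have hsum1 : ∀ a : G, (∑' b, μ a * ν (a⁻¹ * b)) = μ a := by
    intro a
    rw [tsum_mul_left, reindex_tsum a⁻¹ ν, hν.tsum_eq, mul_one]
  have h2 : Summable fun a => ∑' b, μ a * ν (a⁻¹ * b) := by
    simpa only [hsum1] using hμ.summable
  obtain ⟨hc1, hc2, hc3⟩ := tsum_swap h0 h1 h2
  constructor
  · intro g
    exact tsum_nonneg fun h => h0 h g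
  · have hconv : conv μ ν = fun b => ∑' a, μ a * ν (a⁻¹ * b) := rfl
    rw [hconv, Summable.hasSum_iff hc2, hc3]
    simp only [hsum1]
    exact hμ.tsum_eq

lemma convPow_isProb {μ : G → ℝ} (hμ : IsProbMeasure μ) : ∀ n, IsProbMeasure (convPow μ n)
  | 0 => ⟨fun g => by by_cases h : g = 1 <;> simp [convPow, h], by
      simpa [convPow] using hasSum_ite_eq (1 : G) (1 : ℝ)⟩
  | n + 1 => conv_isProb (convPow_isProb hμ n) hμ

-- new part
lemma delta_conv (μ : G → ℝ) : conv (fun g => if g = 1 then (1:ℝ) else 0) μ = μ := by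
  funext g
  have h0 : ∀ h : G, h ≠ 1 → (if h = 1 then (1:ℝ) else 0) * μ (h⁻¹ * g) = 0 := by
    intro h hh; simp [hh]
  rw [show conv (fun g => if g = 1 then (1:ℝ) else 0) μ g
      = ∑' h, (if h = 1 then (1:ℝ) else 0) * μ (h⁻¹ * g) from rfl,
    tsum_eq_single 1 h0]
  simp

lemma conv_delta (μ : G → ℝ) : conv μ (fun g => if g = 1 then (1:ℝ) else 0) = μ := by
  funext g
  have h0 : ∀ h : G, h ≠ g → μ h * (if h⁻¹ * g = 1 then (1:ℝ) else 0) = 0 := by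
    intro h hh
    have hne : h⁻¹ * g ≠ 1 := fun hc => hh (by
      have := inv_mul_eq_one.mp hc; exact this.symm ▸ rfl)
    simp [hne]
  rw [show conv μ (fun g => if g = 1 then (1:ℝ) else 0) g
      = ∑' h, μ h * (if h⁻¹ * g = 1 then (1:ℝ) else 0) from rfl,
    tsum_eq_single g h0]
  simp

lemma conv_assoc {a b c : G → ℝ} (ha : IsProbMeasure a) (hb : IsProbMeasure b)
    (hc : IsProbMeasure c) : conv (conv a b) c = conv a (conv b c) := by
  funext g
  have habp := conv_isProb ha hb
  have hbcp := conv_isProb hb hc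
  set f : G → G → ℝ := fun k h => a k * b (k⁻¹ * h) * c (h⁻¹ * g) with hf
  have h0 : ∀ k h, 0 ≤ f k h := fun k h =>
    mul_nonneg (mul_nonneg (ha.1 k) (hb.1 _)) (hc.1 _)
  have hinner : ∀ k, (∑' h, f k h) = a k * conv b c (k⁻¹ * g) := by
    intro k
    have : (∑' h, f k (k * h)) = ∑' h, f k h := reindex_tsum k (f k)
    rw [← this]
    have : ∀ h : G, f k (k * h) = a k * (b h * c (h⁻¹ * (k⁻¹ * g))) := by
      intro h
      simp only [hf, inv_mul_cancel_left, mul_inv_rev, mul_assoc]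
    rw [tsum_congr this, tsum_mul_left]
    rfl
  have h1 : ∀ k, Summable (f k) := by
    intro k
    have hs : Summable fun h => a k * b (k⁻¹ * h) :=
      (reindex_summable k⁻¹ hb.summable).mul_left (a k)
    refine Summable.of_nonneg_of_le (fun h => h0 k h) (fun h => ?_) hs
    exact mul_le_of_le_one_right (mul_nonneg (ha.1 k) (hb.1 _)) (hc.le_one _)
  have h2 : Summable fun k => ∑' h, f k h := by
    refine Summable.of_nonneg_of_le
      (fun k => tsum_nonneg fun h => h0 k h) (fun k => ?_) ha.summable
    rw [hinner k]
    calc a k * conv b c (k⁻¹ * g) ≤ a k * 1 :=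
          mul_le_mul_of_nonneg_left (hbcp.le_one _) (ha.1 k)
      _ = a k := mul_one _
  obtain ⟨hs1, hs2, hs3⟩ := tsum_swap h0 h1 h2
  have lhs : conv (conv a b) c g = ∑' h, ∑' k, f k h := by
    refine tsum_congr fun h => ?_
    rw [show conv a b h = ∑' k, a k * b (k⁻¹ * h) from rfl, ← tsum_mul_right]
  rw [lhs, hs3, tsum_congr hinner]
  rfl

lemma convPow_succ_left (μ : G → ℝ) (hμ : IsProbMeasure μ) (n : ℕ) :
    convPow μ (n + 1) = conv μ (convPow μ n) := by
  induction n with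
  | zero =>
    show conv (convPow μ 0) μ = conv μ (convPow μ 0)
    rw [show convPow μ 0 = (fun g => if g = 1 then (1:ℝ) else 0) from rfl,
      delta_conv, conv_delta]
  | succ n ih =>
    have hp : IsProbMeasure (convPow μ n) := convPow_isProb hμ n
    show conv (convPow μ (n+1)) μ = conv μ (convPow μ (n+1))
    conv_lhs => rw [ih]
    rw [conv_assoc hμ hp hμ]
    rfl
/-- `T = p(log p - log q) + (q - p) ≥ 0`. -/
lemma key_lb {p q : ℝ} (hp : 0 ≤ p) (hq : 0 ≤ q) (h0 : q = 0 → p = 0) :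
    0 ≤ p * (Real.log p - Real.log q) + (q - p) := by
  rcases eq_or_lt_of_le hp with hp0 | hp0
  · simp [← hp0]; linarith
  · have hq0 : 0 < q := by
      rcases eq_or_lt_of_le hq with h | h
      · exact absurd (h0 h.symm) (ne_of_gt hp0)
      · exact h
    have hlog : Real.log p - Real.log q = Real.log (p / q) := (Real.log_div (ne_of_gt hp0) (ne_of_gt hq0)).symm
    have h1 : 1 - (p / q)⁻¹ ≤ Real.log (p / q) :=
      Real.one_sub_inv_le_log_of_pos (div_pos hp0 hq0)
    have h2 : (p / q)⁻¹ = q / p := by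
      rw [inv_div]
    rw [hlog]
    have : p * Real.log (p / q) ≥ p * (1 - q / p) := by
      apply mul_le_mul_of_nonneg_left _ hp
      rw [← h2]; exact h1
    have hqp : p * (1 - q / p) = p - q := by
      field_simp
    nlinarith

/-- `T ≤ (1 + log C)|p - q|` when `p ≤ C q`, `C ≥ 1`. -/
lemma key_ub {p q C : ℝ} (hp : 0 ≤ p) (hq : 0 ≤ q) (hC : 1 ≤ C) (hpq : p ≤ C * q) :
    p * (Real.log p - Real.log q) + (q - p) ≤ (1 + Real.log C) * |p - q| := by
  have hlogC : 0 ≤ Real.log C := Real.log_nonneg hC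
  rcases eq_or_lt_of_le hp with hp0 | hp0
  · simp [← hp0]
    rw [abs_of_nonneg hq]; nlinarith
  · have hq0 : 0 < q := by
      by_contra h
      push_neg at h
      have : q = 0 := le_antisymm h hq
      rw [this, mul_zero] at hpq; linarith
    have hlog : Real.log p - Real.log q = Real.log (p / q) := (Real.log_div (ne_of_gt hp0) (ne_of_gt hq0)).symm
    rw [hlog]
    rcases le_or_gt p q with hle | hlt
    · -- p ≤ q : log(p/q) ≤ 0, T ≤ q - p
      have : Real.log (p / q) ≤ 0 := Real.log_nonpos (by positivity) (by
        rw [div_le_one hq0]; exact hle)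
      have habs : |p - q| = q - p := by rw [abs_of_nonpos (by linarith)]; ring
      nlinarith
    · -- p > q
      have habs : |p - q| = p - q := abs_of_nonneg (by linarith)
      have hr1 : Real.log (p / q) ≤ Real.log C := by
        apply Real.log_le_log (by positivity)
        rw [div_le_iff₀ hq0]; linarith [hpq]
      have hr2 : Real.log (p / q) ≤ p / q - 1 := Real.log_le_sub_one_of_pos (by positivity)
      have hq2 : q * (p / q - 1) = p - q := by field_simp
      have key : p * Real.log (p / q) ≤ (p - q) * Real.log C + (p - q) := by
        have e1 : p * Real.log (p / q) = (p - q) * Real.log (p / q) + q * Real.log (p / q) := by ring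
        have e2 : (p - q) * Real.log (p / q) ≤ (p - q) * Real.log C :=
          mul_le_mul_of_nonneg_left hr1 (by linarith)
        have e3 : q * Real.log (p / q) ≤ q * (p / q - 1) :=
          mul_le_mul_of_nonneg_left hr2 (le_of_lt hq0)
        rw [e1, hq2] at *
        linarith
      rw [habs]; nlinarith

/-- `log s · (p-q)⁺ ≤ T + log s (s-1) q` for `s > 1`. -/
lemma key_lb2 {p q s : ℝ} (hp : 0 ≤ p) (hq : 0 ≤ q) (h0 : q = 0 → p = 0) (hs : 1 < s) :
    Real.log s * max (p - q) 0 ≤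
      (p * (Real.log p - Real.log q) + (q - p)) + Real.log s * ((s - 1) * q) := by
  have hT := key_lb hp hq h0
  have hlogs : 0 < Real.log s := Real.log_pos hs
  rcases le_or_gt p q with hle | hlt
  · rw [max_eq_right (by linarith)]
    nlinarith [mul_nonneg (le_of_lt hlogs) (mul_nonneg (by linarith : (0:ℝ) ≤ s - 1) hq)]
  · rw [max_eq_left (by linarith)]
    have hp0 : 0 < p := lt_of_le_of_lt hq hlt
    have hq0 : 0 < q := by
      rcases eq_or_lt_of_le hq with h | h
      · exact absurd (h0 h.symm) (ne_of_gt hp0)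
      · exact h
    rcases le_or_gt p (s * q) with hps | hps
    · -- p ≤ s q
      have : p - q ≤ (s - 1) * q := by nlinarith
      nlinarith
    · -- p > s q : show log s (p - s q) ≤ T
      have hsq0 : 0 < s * q := by positivity
      have e1 : Real.log p - Real.log q = Real.log (p / (s * q)) + Real.log s := by
        rw [Real.log_div (ne_of_gt hp0) (ne_of_gt hsq0), Real.log_mul (by positivity) (ne_of_gt hq0)]
        ring
      have e2 : 1 - (p / (s * q))⁻¹ ≤ Real.log (p / (s * q)) :=
        Real.one_sub_inv_le_log_of_pos (by positivity)
      have e3 : (p / (s * q))⁻¹ = s * q / p := inv_div _ _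
      rw [e3] at e2
      have e4 : p * (1 - s * q / p) = p - s * q := by field_simp
      have e5 : p * Real.log (p / (s * q)) ≥ p - s * q := by
        nlinarith [mul_le_mul_of_nonneg_left e2 hp]
      -- s log s ≥ s - 1
      have hs0 : (0:ℝ) < s := lt_trans one_pos hs
      have e6 : s * Real.log s ≥ s - 1 := by
        have h7 := Real.one_sub_inv_le_log_of_pos hs0
        have h8 : s * (1 - s⁻¹) = s - 1 := by field_simp
        nlinarith [mul_le_mul_of_nonneg_left h7 (le_of_lt hs0)]
      rw [e1]
      nlinarith [mul_nonneg (le_of_lt hq0) (by linarith [e6] : (0:ℝ) ≤ s * Real.log s - (s - 1))]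
/-- The summand of entropy. -/
noncomputable def ent {G : Type*} (μ : G → ℝ) (g : G) : ℝ := -(μ g * Real.log (μ g))

lemma ent_nonneg {G : Type*} {μ : G → ℝ} (h0 : ∀ g, 0 ≤ μ g) (h1 : ∀ g, μ g ≤ 1) (g : G) :
    0 ≤ ent μ g := by
  have := Real.log_nonpos (h0 g) (h1 g)
  unfold ent; nlinarith [h0 g]

lemma entropy_eq {G : Type*} (μ : G → ℝ) : entropy μ = ∑' g, ENNReal.ofReal (ent μ g) := rfl

lemma entropy_ne_top_iff {μ : G → ℝ} (hμ : IsProbMeasure μ) :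
    entropy μ ≠ ⊤ ↔ Summable (ent μ) := by
  have hnn := ent_nonneg hμ.1 hμ.le_one
  rw [entropy_eq]
  constructor
  · intro h
    have := ENNReal.summable_toReal h
    refine this.congr fun g => ?_
    rw [ENNReal.toReal_ofReal (hnn g)]
  · intro h
    rw [← ENNReal.ofReal_tsum_of_nonneg hnn h]
    exact ENNReal.ofReal_ne_top

lemma entropy_toReal {μ : G → ℝ} (hμ : IsProbMeasure μ) (hs : Summable (ent μ)) :
    (entropy μ).toReal = ∑' g, ent μ g := by
  rw [entropy_eq, ← ENNReal.ofReal_tsum_of_nonneg (ent_nonneg hμ.1 hμ.le_one) hs,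
    ENNReal.toReal_ofReal (tsum_nonneg (ent_nonneg hμ.1 hμ.le_one))]

lemma conv_fiber_summable {μ ν : G → ℝ} (hμ : IsProbMeasure μ) (hν : IsProbMeasure ν) (h : G) :
    Summable fun g => μ g * ν (g⁻¹ * h) :=
  Summable.of_nonneg_of_le (fun g => mul_nonneg (hμ.1 g) (hν.1 _))
    (fun g => mul_le_of_le_one_right (hμ.1 g) (hν.le_one _)) hμ.summable

lemma le_conv {μ ν : G → ℝ} (hμ : IsProbMeasure μ) (hν : IsProbMeasure ν) (g h : G) :
    μ g * ν (g⁻¹ * h) ≤ conv μ ν h :=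
  Summable.le_tsum (conv_fiber_summable hμ hν h) g fun j _ => mul_nonneg (hμ.1 j) (hν.1 _)

lemma negmullog_mul (x y : ℝ) :
    -(x * y * Real.log (x * y)) = y * -(x * Real.log x) + x * -(y * Real.log y) := by
  rcases eq_or_ne x 0 with hx | hx
  · simp [hx]
  rcases eq_or_ne y 0 with hy | hy
  · simp [hy]
  rw [Real.log_mul hx hy]; ring

lemma ofReal_tsum_reindex_prob {ν : G → ℝ} (hν : IsProbMeasure ν) (k : G) :
    (∑' h, ENNReal.ofReal (ν (k * h))) = 1 := by
  have : (∑' h, ENNReal.ofReal (ν (k * h))) = ∑' h, ENNReal.ofReal (ν h) :=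
    (Equiv.mulLeft k).tsum_eq fun h => ENNReal.ofReal (ν h)
  rw [this, ← ENNReal.ofReal_tsum_of_nonneg hν.1 hν.summable, hν.tsum_eq, ENNReal.ofReal_one]

lemma entropy_reindex {ν : G → ℝ} (k : G) :
    (∑' h, ENNReal.ofReal (ent ν (k * h))) = entropy ν :=
  (Equiv.mulLeft k).tsum_eq fun h => ENNReal.ofReal (ent ν h)

lemma entropy_conv_le {μ ν : G → ℝ} (hμ : IsProbMeasure μ) (hν : IsProbMeasure ν) :
    entropy (conv μ ν) ≤ entropy μ + entropy ν := by
  have hq := conv_isProb hμ hν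
  have step1 : ∀ h, ENNReal.ofReal (ent (conv μ ν) h) ≤
      ∑' g, ENNReal.ofReal (-(μ g * ν (g⁻¹ * h) * Real.log (μ g * ν (g⁻¹ * h)))) := by
    intro h
    have hfib := conv_fiber_summable hμ hν h
    have hnn : ∀ g, 0 ≤ μ g * ν (g⁻¹ * h) * (-Real.log (conv μ ν h)) := fun g =>
      mul_nonneg (mul_nonneg (hμ.1 g) (hν.1 _))
        (neg_nonneg.2 (Real.log_nonpos (hq.1 h) (hq.le_one h)))
    have hsum : (∑' g, μ g * ν (g⁻¹ * h) * (-Real.log (conv μ ν h))) = ent (conv μ ν) h := by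
      rw [tsum_mul_right]
      show conv μ ν h * (-Real.log (conv μ ν h)) = ent (conv μ ν) h
      unfold ent; ring
    calc ENNReal.ofReal (ent (conv μ ν) h)
        = ∑' g, ENNReal.ofReal (μ g * ν (g⁻¹ * h) * (-Real.log (conv μ ν h))) := by
          rw [← ENNReal.ofReal_tsum_of_nonneg hnn (hfib.mul_right _), hsum]
      _ ≤ _ := by
          refine ENNReal.tsum_le_tsum fun g => ENNReal.ofReal_le_ofReal ?_
          set a := μ g * ν (g⁻¹ * h) with ha
          have han : (0:ℝ) ≤ a := mul_nonneg (hμ.1 g) (hν.1 _)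
          rcases eq_or_lt_of_le han with h0 | h0
          · rw [← h0]; simp
          · have hle : a ≤ conv μ ν h := le_conv hμ hν g h
            have : Real.log a ≤ Real.log (conv μ ν h) :=
              Real.log_le_log h0 hle
            nlinarith
  have step2 : ∀ g, (∑' h, ENNReal.ofReal (-(μ g * ν (g⁻¹ * h) * Real.log (μ g * ν (g⁻¹ * h)))))
      = ENNReal.ofReal (ent μ g) + ENNReal.ofReal (μ g) * entropy ν := by
    intro g
    have e1 : ∀ h, ENNReal.ofReal (-(μ g * ν (g⁻¹ * h) * Real.log (μ g * ν (g⁻¹ * h))))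
        = ENNReal.ofReal (ν (g⁻¹ * h)) * ENNReal.ofReal (ent μ g)
          + ENNReal.ofReal (μ g) * ENNReal.ofReal (ent ν (g⁻¹ * h)) := by
      intro h
      simp only [ent]
      rw [negmullog_mul, ENNReal.ofReal_add
          (mul_nonneg (hν.1 _) (ent_nonneg hμ.1 hμ.le_one g) :
            (0:ℝ) ≤ ν (g⁻¹ * h) * -(μ g * Real.log (μ g)))
          (mul_nonneg (hμ.1 g) (ent_nonneg hν.1 hν.le_one _) :
            (0:ℝ) ≤ μ g * -(ν (g⁻¹ * h) * Real.log (ν (g⁻¹ * h)))),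
        ENNReal.ofReal_mul (hν.1 _), ENNReal.ofReal_mul (hμ.1 g)]
    rw [tsum_congr e1, ENNReal.tsum_add, ENNReal.tsum_mul_right, ENNReal.tsum_mul_left,
      ofReal_tsum_reindex_prob hν g⁻¹, one_mul, entropy_reindex g⁻¹]
  calc entropy (conv μ ν) = ∑' h, ENNReal.ofReal (ent (conv μ ν) h) := rfl
    _ ≤ ∑' h, ∑' g, ENNReal.ofReal (-(μ g * ν (g⁻¹ * h) * Real.log (μ g * ν (g⁻¹ * h)))) :=
        ENNReal.tsum_le_tsum step1
    _ = ∑' g, ∑' h, ENNReal.ofReal (-(μ g * ν (g⁻¹ * h) * Real.log (μ g * ν (g⁻¹ * h)))) :=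
        ENNReal.tsum_comm
    _ = ∑' g, (ENNReal.ofReal (ent μ g) + ENNReal.ofReal (μ g) * entropy ν) := tsum_congr step2
    _ = entropy μ + (∑' g, ENNReal.ofReal (μ g)) * entropy ν := by
        rw [ENNReal.tsum_add, ENNReal.tsum_mul_right, ← entropy_eq]
    _ = entropy μ + entropy ν := by
        rw [show (∑' g, ENNReal.ofReal (μ g)) = 1 by
          rw [← ENNReal.ofReal_tsum_of_nonneg hμ.1 hμ.summable, hμ.tsum_eq, ENNReal.ofReal_one],
          one_mul]

/-- The summand of relative entropy plus correction: `T = p(log p - log q) + (q - p)`. -/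
noncomputable def TT (μ : G → ℝ) (n : ℕ) (g h : G) : ℝ :=
  convPow μ n (g⁻¹ * h) * (Real.log (convPow μ n (g⁻¹ * h)) - Real.log (convPow μ (n + 1) h))
    + (convPow μ (n + 1) h - convPow μ n (g⁻¹ * h))

noncomputable def Dg (μ : G → ℝ) (n : ℕ) (g : G) : ℝ := ∑' h, TT μ n g h

noncomputable def Ient (μ : G → ℝ) (n : ℕ) : ℝ := ∑' g, μ g * Dg μ n g

noncomputable def TV (μ : G → ℝ) (n : ℕ) (g : G) : ℝ :=
  ∑' h, |convPow μ n (g⁻¹ * h) - convPow μ (n + 1) h|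

noncomputable def Hsum (μ : G → ℝ) (n : ℕ) : ℝ := ∑' h, ent (convPow μ n) h

variable {μ : G → ℝ}

lemma q_repr (hμ : IsProbMeasure μ) (n : ℕ) (h : G) :
    convPow μ (n+1) h = ∑' g, μ g * convPow μ n (g⁻¹ * h) := by
  conv_lhs => rw [convPow_succ_left μ hμ n]
  rfl

lemma mul_le_q (hμ : IsProbMeasure μ) (n : ℕ) (g h : G) :
    μ g * convPow μ n (g⁻¹ * h) ≤ convPow μ (n+1) h := by
  rw [convPow_succ_left μ hμ n]
  exact le_conv hμ (convPow_isProb hμ n) g h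

lemma TT_nonneg (hμ : IsProbMeasure μ) {g : G} (hg : 0 < μ g) (n : ℕ) (h : G) :
    0 ≤ TT μ n g h := by
  refine key_lb ((convPow_isProb hμ n).1 _) ((convPow_isProb hμ (n+1)).1 _) (fun hq => ?_)
  have h1 := mul_le_q hμ n g h
  have h2 := (convPow_isProb hμ n).1 (g⁻¹ * h)
  rw [hq] at h1
  nlinarith

lemma mul_TT_nonneg (hμ : IsProbMeasure μ) (n : ℕ) (g h : G) :
    0 ≤ μ g * TT μ n g h := by
  rcases eq_or_lt_of_le (hμ.1 g) with h0 | h0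
  · rw [← h0, zero_mul]
  · exact mul_nonneg h0.le (TT_nonneg hμ h0 n h)

lemma chain (hμ : IsProbMeasure μ) (hsn : ∀ m, Summable (ent (convPow μ m))) (n : ℕ) :
    (∀ g, Summable fun h => μ g * TT μ n g h) ∧
    (Summable fun g => μ g * Dg μ n g) ∧
    Hsum μ (n+1) = Hsum μ n + Ient μ n := by
  have hpn := convPow_isProb hμ n
  have hqn := convPow_isProb hμ (n+1)
  set A : G × G → ℝ := fun z => μ z.1 * ent (convPow μ n) (z.1⁻¹ * z.2) with hA
  set B : G × G → ℝ :=
    fun z => μ z.1 * convPow μ n (z.1⁻¹ * z.2) * (-Real.log (convPow μ (n+1) z.2)) with hB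
  set C : G × G → ℝ := fun z => μ z.1 * convPow μ (n+1) z.2 with hC
  set E : G × G → ℝ := fun z => μ z.1 * convPow μ n (z.1⁻¹ * z.2) with hE
  have hA0 : ∀ z, 0 ≤ A z := fun z =>
    mul_nonneg (hμ.1 _) (ent_nonneg hpn.1 hpn.le_one _)
  have hB0 : ∀ z, 0 ≤ B z := fun z =>
    mul_nonneg (mul_nonneg (hμ.1 _) (hpn.1 _))
      (neg_nonneg.2 (Real.log_nonpos (hqn.1 _) (hqn.le_one _)))
  have hC0 : ∀ z, 0 ≤ C z := fun z => mul_nonneg (hμ.1 _) (hqn.1 _)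
  have hE0 : ∀ z, 0 ≤ E z := fun z => mul_nonneg (hμ.1 _) (hpn.1 _)
  -- A
  have hAfib : ∀ g, Summable fun h => A (g, h) := fun g =>
    (reindex_summable g⁻¹ (hsn n)).mul_left (μ g)
  have hAinner : ∀ g, (∑' h, A (g, h)) = μ g * Hsum μ n := by
    intro g
    rw [show (∑' h, A (g, h)) = ∑' h, μ g * ent (convPow μ n) (g⁻¹ * h) from rfl,
      tsum_mul_left, reindex_tsum g⁻¹ (ent (convPow μ n))]
    rfl
  have hAouter : Summable fun g => ∑' h, A (g, h) := by
    refine (hμ.summable.mul_right (Hsum μ n)).congr fun g => (hAinner g).symm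
  have hASum : Summable A := (summable_prod_of_nonneg hA0).2 ⟨hAfib, hAouter⟩
  have hAtsum : ∑' z, A z = Hsum μ n := by
    rw [Summable.tsum_prod' hASum hAfib, tsum_congr hAinner, tsum_mul_right, hμ.tsum_eq, one_mul]
  -- B (summable in the swapped order)
  set B2 : G × G → ℝ :=
    fun w => μ w.2 * convPow μ n (w.2⁻¹ * w.1) * (-Real.log (convPow μ (n+1) w.1)) with hB2
  have hB20 : ∀ w, 0 ≤ B2 w := fun w =>
    mul_nonneg (mul_nonneg (hμ.1 _) (hpn.1 _))
      (neg_nonneg.2 (Real.log_nonpos (hqn.1 _) (hqn.le_one _)))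
  have hB2fib : ∀ h, Summable fun g => B2 (h, g) := fun h =>
    (conv_fiber_summable hμ hpn h).mul_right (-Real.log (convPow μ (n+1) h))
  have hB2inner : ∀ h, (∑' g, B2 (h, g)) = ent (convPow μ (n+1)) h := by
    intro h
    rw [show (∑' g, B2 (h, g))
        = ∑' g, (μ g * convPow μ n (g⁻¹ * h)) * (-Real.log (convPow μ (n+1) h)) from rfl,
      tsum_mul_right, ← q_repr hμ n h]
    unfold ent; ring
  have hB2outer : Summable fun h => ∑' g, B2 (h, g) :=
    (hsn (n+1)).congr fun h => (hB2inner h).symm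
  have hB2Sum : Summable B2 := (summable_prod_of_nonneg hB20).2 ⟨hB2fib, hB2outer⟩
  have hB2tsum : ∑' w, B2 w = Hsum μ (n+1) := by
    rw [Summable.tsum_prod' hB2Sum hB2fib, tsum_congr hB2inner]
    rfl
  have hBSum : Summable B := by
    have h1 : Summable (B2 ∘ (Equiv.prodComm G G)) :=
      ((Equiv.prodComm G G).summable_iff (f := B2)).2 hB2Sum
    exact h1.congr fun z => rfl
  have hBtsum : ∑' z, B z = Hsum μ (n+1) := by
    rw [← hB2tsum, ← (Equiv.prodComm G G).tsum_eq B2]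
    exact tsum_congr fun z => rfl
  have hBfib : ∀ g, Summable fun h => B (g, h) := by
    intro g
    refine Summable.of_nonneg_of_le (fun h => hB0 (g, h)) (fun h => ?_) (hsn (n+1))
    show μ g * convPow μ n (g⁻¹ * h) * (-Real.log (convPow μ (n+1) h))
      ≤ ent (convPow μ (n+1)) h
    have h1 : μ g * convPow μ n (g⁻¹ * h) * (-Real.log (convPow μ (n+1) h))
        ≤ convPow μ (n+1) h * (-Real.log (convPow μ (n+1) h)) :=
      mul_le_mul_of_nonneg_right (mul_le_q hμ n g h)
        (neg_nonneg.2 (Real.log_nonpos (hqn.1 _) (hqn.le_one _)))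
    calc μ g * convPow μ n (g⁻¹ * h) * (-Real.log (convPow μ (n+1) h))
        ≤ convPow μ (n+1) h * (-Real.log (convPow μ (n+1) h)) := h1
      _ = ent (convPow μ (n+1)) h := by unfold ent; ring
  -- C
  have hCfib : ∀ g, Summable fun h => C (g, h) := fun g => hqn.summable.mul_left (μ g)
  have hCinner : ∀ g, (∑' h, C (g, h)) = μ g := by
    intro g
    rw [show (∑' h, C (g, h)) = ∑' h, μ g * convPow μ (n+1) h from rfl,
      tsum_mul_left, hqn.tsum_eq, mul_one]
  have hCouter : Summable fun g => ∑' h, C (g, h) :=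
    hμ.summable.congr fun g => (hCinner g).symm
  have hCSum : Summable C := (summable_prod_of_nonneg hC0).2 ⟨hCfib, hCouter⟩
  have hCtsum : ∑' z, C z = 1 := by
    rw [Summable.tsum_prod' hCSum hCfib, tsum_congr hCinner, hμ.tsum_eq]
  -- E
  have hEfib : ∀ g, Summable fun h => E (g, h) := fun g =>
    (reindex_summable g⁻¹ hpn.summable).mul_left (μ g)
  have hEinner : ∀ g, (∑' h, E (g, h)) = μ g := by
    intro g
    rw [show (∑' h, E (g, h)) = ∑' h, μ g * convPow μ n (g⁻¹ * h) from rfl,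
      tsum_mul_left, reindex_tsum g⁻¹ (convPow μ n), hpn.tsum_eq, mul_one]
  have hEouter : Summable fun g => ∑' h, E (g, h) :=
    hμ.summable.congr fun g => (hEinner g).symm
  have hESum : Summable E := (summable_prod_of_nonneg hE0).2 ⟨hEfib, hEouter⟩
  have hEtsum : ∑' z, E z = 1 := by
    rw [Summable.tsum_prod' hESum hEfib, tsum_congr hEinner, hμ.tsum_eq]
  -- the identity
  have hid : ∀ z : G × G, μ z.1 * TT μ n z.1 z.2 = B z + C z - (A z + E z) := by
    intro z
    simp only [hA, hB, hC, hE, TT, ent]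
    ring
  have hSfib : ∀ g, Summable fun h => μ g * TT μ n g h := fun g =>
    ((((hBfib g).add (hCfib g)).sub ((hAfib g).add (hEfib g))).congr
      (fun h => (hid (g, h)).symm))
  have hSSum : Summable fun z : G × G => μ z.1 * TT μ n z.1 z.2 :=
    ((hBSum.add hCSum).sub (hASum.add hESum)).congr fun z => (hid z).symm
  have hStsum : (∑' z : G × G, μ z.1 * TT μ n z.1 z.2) = Hsum μ (n+1) - Hsum μ n := by
    rw [tsum_congr hid, Summable.tsum_sub (hBSum.add hCSum) (hASum.add hESum),
      Summable.tsum_add hBSum hCSum, Summable.tsum_add hASum hESum, hAtsum, hBtsum, hCtsum, hEtsum]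
    ring
  have houter : Summable fun g => μ g * Dg μ n g := by
    have h1 := ((summable_prod_of_nonneg fun z => mul_TT_nonneg hμ n z.1 z.2).1 hSSum).2
    refine h1.congr fun g => ?_
    show (∑' h, μ g * TT μ n g h) = μ g * Dg μ n g
    rw [tsum_mul_left]
    rfl
  refine ⟨hSfib, houter, ?_⟩
  have h2 : Ient μ n = ∑' z : G × G, μ z.1 * TT μ n z.1 z.2 := by
    rw [Summable.tsum_prod' hSSum hSfib]
    refine (tsum_congr fun g => ?_).symm
    show (∑' h, μ g * TT μ n g h) = μ g * Dg μ n g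
    rw [tsum_mul_left]
    rfl
  rw [h2, hStsum]
  ring

lemma summable_ent_convPow (hμ : IsProbMeasure μ) (hH : entropy μ ≠ ⊤) :
    ∀ n, Summable (ent (convPow μ n)) := by
  intro n
  induction n with
  | zero =>
    rw [← entropy_ne_top_iff (convPow_isProb hμ 0)]
    have h0 : ∀ g : G, ENNReal.ofReal (ent (convPow μ 0) g) = 0 := by
      intro g
      show ENNReal.ofReal (-(convPow μ 0 g * Real.log (convPow μ 0 g))) = 0
      by_cases h : g = 1 <;> simp [convPow, h]
    rw [entropy_eq, tsum_congr h0, tsum_zero]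
    exact ENNReal.zero_ne_top
  | succ n ih =>
    rw [← entropy_ne_top_iff (convPow_isProb hμ (n+1))]
    have hle : entropy (convPow μ (n+1)) ≤ entropy μ + entropy (convPow μ n) := by
      rw [convPow_succ_left μ hμ n]
      exact entropy_conv_le hμ (convPow_isProb hμ n)
    have hnt : entropy (convPow μ n) ≠ ⊤ := (entropy_ne_top_iff (convPow_isProb hμ n)).2 ih
    exact ne_top_of_le_ne_top (ENNReal.add_ne_top.2 ⟨hH, hnt⟩) hle

lemma Hsum_toReal (hμ : IsProbMeasure μ) (hH : entropy μ ≠ ⊤) (n : ℕ) :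
    (entropy (convPow μ n)).toReal = Hsum μ n :=
  entropy_toReal (convPow_isProb hμ n) (summable_ent_convPow hμ hH n)

lemma Hsum_zero (μ : G → ℝ) : Hsum μ 0 = 0 := by
  have h0 : ∀ g : G, ent (convPow μ 0) g = 0 := by
    intro g
    show -(convPow μ 0 g * Real.log (convPow μ 0 g)) = 0
    by_cases h : g = 1 <;> simp [convPow, h]
  rw [Hsum, tsum_congr h0, tsum_zero]

lemma Hsum_eq_range (hμ : IsProbMeasure μ) (hH : entropy μ ≠ ⊤) (n : ℕ) :
    Hsum μ n = ∑ k ∈ Finset.range n, Ient μ k := by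
  induction n with
  | zero => simp [Hsum_zero]
  | succ n ih =>
    rw [Finset.sum_range_succ, ← ih,
      (chain hμ (summable_ent_convPow hμ hH) n).2.2]

lemma Dg_nonneg (hμ : IsProbMeasure μ) {g : G} (hg : 0 < μ g) (n : ℕ) :
    0 ≤ Dg μ n g :=
  tsum_nonneg fun h => TT_nonneg hμ hg n h

lemma mul_Dg_nonneg (hμ : IsProbMeasure μ) (n : ℕ) (g : G) :
    0 ≤ μ g * Dg μ n g := by
  rcases eq_or_lt_of_le (hμ.1 g) with h0 | h0
  · rw [← h0, zero_mul]
  · exact mul_nonneg h0.le (Dg_nonneg hμ h0 n)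

lemma Ient_nonneg (hμ : IsProbMeasure μ) (n : ℕ) : 0 ≤ Ient μ n :=
  tsum_nonneg fun g => mul_Dg_nonneg hμ n g

lemma mul_Dg_le_Ient (hμ : IsProbMeasure μ) (hH : entropy μ ≠ ⊤) (n : ℕ) (g : G) :
    μ g * Dg μ n g ≤ Ient μ n :=
  Summable.le_tsum (chain hμ (summable_ent_convPow hμ hH) n).2.1 g
    fun j _ => mul_Dg_nonneg hμ n j

lemma TT_summable (hμ : IsProbMeasure μ) (hH : entropy μ ≠ ⊤) {g : G} (hg : 0 < μ g) (n : ℕ) :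
    Summable (TT μ n g) := by
  have h1 := (chain hμ (summable_ent_convPow hμ hH) n).1 g
  have h2 := h1.mul_left (μ g)⁻¹
  refine h2.congr fun h => ?_
  rw [inv_mul_cancel_left₀ (ne_of_gt hg)]

lemma TV_summand_summable (hμ : IsProbMeasure μ) (n : ℕ) (g : G) :
    Summable fun h => |convPow μ n (g⁻¹ * h) - convPow μ (n+1) h| :=
  ((reindex_summable g⁻¹ (convPow_isProb hμ n).summable).sub
    (convPow_isProb hμ (n+1)).summable).abs

lemma TV_nonneg (μ : G → ℝ) (n : ℕ) (g : G) : 0 ≤ TV μ n g :=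
  tsum_nonneg fun h => abs_nonneg _

lemma TV_le_two (hμ : IsProbMeasure μ) (n : ℕ) (g : G) : TV μ n g ≤ 2 := by
  have hpn := convPow_isProb hμ n
  have hqn := convPow_isProb hμ (n+1)
  have h1 : Summable fun h => convPow μ n (g⁻¹ * h) := reindex_summable g⁻¹ hpn.summable
  have hle : ∀ h, |convPow μ n (g⁻¹ * h) - convPow μ (n+1) h|
      ≤ convPow μ n (g⁻¹ * h) + convPow μ (n+1) h := fun h => by
    rw [abs_sub_comm]
    calc |convPow μ (n+1) h - convPow μ n (g⁻¹ * h)|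
        ≤ |convPow μ (n+1) h| + |convPow μ n (g⁻¹ * h)| := abs_sub _ _
      _ = convPow μ n (g⁻¹ * h) + convPow μ (n+1) h := by
          rw [abs_of_nonneg (hqn.1 _), abs_of_nonneg (hpn.1 _)]; ring
  calc TV μ n g ≤ ∑' h, (convPow μ n (g⁻¹ * h) + convPow μ (n+1) h) :=
        Summable.tsum_le_tsum hle (TV_summand_summable hμ n g) (h1.add hqn.summable)
    _ = 1 + 1 := by
        rw [Summable.tsum_add h1 hqn.summable, reindex_tsum g⁻¹ (convPow μ n), hpn.tsum_eq, hqn.tsum_eq]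
    _ = 2 := by norm_num

lemma Dg_le_TV (hμ : IsProbMeasure μ) (hH : entropy μ ≠ ⊤) {g : G} (hg : 0 < μ g) (n : ℕ) :
    Dg μ n g ≤ (1 + Real.log (μ g)⁻¹) * TV μ n g := by
  have hpn := convPow_isProb hμ n
  have hqn := convPow_isProb hμ (n+1)
  have hC1 : 1 ≤ (μ g)⁻¹ := (one_le_inv₀ hg).2 (hμ.le_one g)
  have hpt : ∀ h, TT μ n g h
      ≤ (1 + Real.log (μ g)⁻¹) * |convPow μ n (g⁻¹ * h) - convPow μ (n+1) h| := by
    intro h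
    refine key_ub (hpn.1 _) (hqn.1 _) hC1 ?_
    have h1 := mul_le_q hμ n g h
    calc convPow μ n (g⁻¹ * h) = (μ g)⁻¹ * (μ g * convPow μ n (g⁻¹ * h)) := by
          rw [inv_mul_cancel_left₀ (ne_of_gt hg)]
      _ ≤ (μ g)⁻¹ * convPow μ (n+1) h :=
          mul_le_mul_of_nonneg_left h1 (inv_nonneg.2 hg.le)
  calc Dg μ n g ≤ ∑' h, (1 + Real.log (μ g)⁻¹) * |convPow μ n (g⁻¹ * h) - convPow μ (n+1) h| :=
        Summable.tsum_le_tsum hpt (TT_summable hμ hH hg n)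
          ((TV_summand_summable hμ n g).mul_left _)
    _ = (1 + Real.log (μ g)⁻¹) * TV μ n g := tsum_mul_left

lemma TV_le_Dg (hμ : IsProbMeasure μ) (hH : entropy μ ≠ ⊤) {g : G} (hg : 0 < μ g)
    (n : ℕ) {s : ℝ} (hs : 1 < s) :
    Real.log s * TV μ n g ≤ 2 * Dg μ n g + Real.log s * (2 * (s - 1)) := by
  have hpn := convPow_isProb hμ n
  have hqn := convPow_isProb hμ (n+1)
  set d : G → ℝ := fun h => convPow μ n (g⁻¹ * h) - convPow μ (n+1) h with hd
  have hd1 : Summable fun h => convPow μ n (g⁻¹ * h) := reindex_summable g⁻¹ hpn.summable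
  have hdsummable : Summable d := hd1.sub hqn.summable
  have habs : Summable fun h => |d h| := hdsummable.abs
  have hmax : Summable fun h => max (d h) 0 :=
    Summable.of_nonneg_of_le (fun h => le_max_right _ _)
      (fun h => max_le (le_abs_self _) (abs_nonneg _)) habs
  have hdsum : ∑' h, d h = 0 := by
    rw [hd, Summable.tsum_sub hd1 hqn.summable, reindex_tsum g⁻¹ (convPow μ n),
      hpn.tsum_eq, hqn.tsum_eq, sub_self]
  have habs_eq : TV μ n g = 2 * ∑' h, max (d h) 0 := by
    have hpt : ∀ h, |d h| = 2 * max (d h) 0 - d h := by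
      intro h
      rcases le_or_gt 0 (d h) with h0 | h0
      · rw [abs_of_nonneg h0, max_eq_left h0]; ring
      · rw [abs_of_neg h0, max_eq_right h0.le]; ring
    rw [show TV μ n g = ∑' h, |d h| from rfl, tsum_congr hpt,
      Summable.tsum_sub (hmax.mul_left 2) hdsummable, tsum_mul_left, hdsum, sub_zero]
  have hkey : Real.log s * ∑' h, max (d h) 0 ≤ Dg μ n g + Real.log s * (s - 1) := by
    have hpt : ∀ h, Real.log s * max (d h) 0
        ≤ TT μ n g h + (Real.log s * (s - 1)) * convPow μ (n+1) h := by
      intro h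
      have hk := key_lb2 (hpn.1 (g⁻¹ * h)) (hqn.1 h) (fun hq => by
        have h1 := mul_le_q hμ n g h
        have h2 := hpn.1 (g⁻¹ * h)
        rw [hq] at h1
        nlinarith) hs
      calc Real.log s * max (d h) 0
          = Real.log s * max (convPow μ n (g⁻¹ * h) - convPow μ (n+1) h) 0 := rfl
        _ ≤ (convPow μ n (g⁻¹ * h) * (Real.log (convPow μ n (g⁻¹ * h))
              - Real.log (convPow μ (n+1) h)) + (convPow μ (n+1) h - convPow μ n (g⁻¹ * h)))
            + Real.log s * ((s - 1) * convPow μ (n+1) h) := hk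
        _ = TT μ n g h + (Real.log s * (s - 1)) * convPow μ (n+1) h := by
            rw [TT]; ring
    calc Real.log s * ∑' h, max (d h) 0 = ∑' h, Real.log s * max (d h) 0 := tsum_mul_left.symm
      _ ≤ ∑' h, (TT μ n g h + (Real.log s * (s - 1)) * convPow μ (n+1) h) :=
          Summable.tsum_le_tsum hpt (hmax.mul_left _)
            ((TT_summable hμ hH hg n).add (hqn.summable.mul_left _))
      _ = Dg μ n g + Real.log s * (s - 1) := by
          rw [Summable.tsum_add (TT_summable hμ hH hg n) (hqn.summable.mul_left _), tsum_mul_left,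
            hqn.tsum_eq, mul_one]
          rfl
  rw [habs_eq]
  have hls : 0 < Real.log s := Real.log_pos hs
  nlinarith [hkey]

lemma TV_antitone (hμ : IsProbMeasure μ) (n : ℕ) (g : G) :
    TV μ (n+1) g ≤ TV μ n g := by
  have hpn := convPow_isProb hμ n
  have hqn := convPow_isProb hμ (n+1)
  have hqn2 := convPow_isProb hμ (n+2)
  set d : G → ℝ := fun k => convPow μ n (g⁻¹ * k) - convPow μ (n+1) k with hd
  have hd1 : Summable fun k => convPow μ n (g⁻¹ * k) := reindex_summable g⁻¹ hpn.summable
  have hd1' : Summable fun k => convPow μ (n+1) (g⁻¹ * k) := reindex_summable g⁻¹ hqn.summable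
  have hdsummable : Summable d := hd1.sub hqn.summable
  have habs : Summable fun k => |d k| := hdsummable.abs
  have hrepr : ∀ h, convPow μ (n+1) (g⁻¹ * h)
      = ∑' k, convPow μ n (g⁻¹ * k) * μ (k⁻¹ * h) := by
    intro h
    show (∑' k, convPow μ n k * μ (k⁻¹ * (g⁻¹ * h))) = _
    rw [← reindex_tsum g⁻¹ (fun k => convPow μ n k * μ (k⁻¹ * (g⁻¹ * h)))]
    refine tsum_congr fun k => ?_
    have : (g⁻¹ * k)⁻¹ * (g⁻¹ * h) = k⁻¹ * h := by group
    rw [this]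
  have hrepr2 : ∀ h, convPow μ (n+2) h = ∑' k, convPow μ (n+1) k * μ (k⁻¹ * h) :=
    fun h => rfl
  have hsum1 : ∀ h, Summable fun k => convPow μ n (g⁻¹ * k) * μ (k⁻¹ * h) := by
    intro h
    refine Summable.of_nonneg_of_le (fun k => mul_nonneg (hpn.1 _) (hμ.1 _))
      (fun k => ?_) hd1
    exact mul_le_of_le_one_right (hpn.1 _) (hμ.le_one _)
  have hsum2 : ∀ h, Summable fun k => convPow μ (n+1) k * μ (k⁻¹ * h) := by
    intro h
    refine Summable.of_nonneg_of_le (fun k => mul_nonneg (hqn.1 _) (hμ.1 _))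
      (fun k => ?_) hqn.summable
    exact mul_le_of_le_one_right (hqn.1 _) (hμ.le_one _)
  have hdd : ∀ h, convPow μ (n+1) (g⁻¹ * h) - convPow μ (n+2) h
      = ∑' k, d k * μ (k⁻¹ * h) := by
    intro h
    rw [hrepr h, hrepr2 h, ← Summable.tsum_sub (hsum1 h) (hsum2 h)]
    refine tsum_congr fun k => ?_
    rw [hd]
    ring
  have hsumabs : ∀ h, Summable fun k => |d k| * μ (k⁻¹ * h) := by
    intro h
    refine Summable.of_nonneg_of_le (fun k => mul_nonneg (abs_nonneg _) (hμ.1 _))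
      (fun k => ?_) habs
    exact mul_le_of_le_one_right (abs_nonneg _) (hμ.le_one _)
  have hptwise : ∀ h, |convPow μ (n+1) (g⁻¹ * h) - convPow μ (n+2) h|
      ≤ ∑' k, |d k| * μ (k⁻¹ * h) := by
    intro h
    rw [hdd h]
    have h1 : Summable fun k => ‖d k * μ (k⁻¹ * h)‖ := by
      refine (hsumabs h).congr fun k => ?_
      rw [Real.norm_eq_abs, abs_mul, abs_of_nonneg (hμ.1 _)]
    calc ‖∑' k, d k * μ (k⁻¹ * h)‖ ≤ ∑' k, ‖d k * μ (k⁻¹ * h)‖ := norm_tsum_le_tsum_norm h1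
      _ = ∑' k, |d k| * μ (k⁻¹ * h) := by
          refine tsum_congr fun k => ?_
          rw [Real.norm_eq_abs, abs_mul, abs_of_nonneg (hμ.1 _)]
  have hswap := tsum_swap (f := fun k h => |d k| * μ (k⁻¹ * h))
    (fun k h => mul_nonneg (abs_nonneg _) (hμ.1 _))
    (fun k => (reindex_summable k⁻¹ hμ.summable).mul_left |d k|)
    (by
      refine habs.congr fun k => ?_
      rw [tsum_mul_left, reindex_tsum k⁻¹ μ, hμ.tsum_eq, mul_one])
  calc TV μ (n+1) g = ∑' h, |convPow μ (n+1) (g⁻¹ * h) - convPow μ (n+2) h| := rfl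
    _ ≤ ∑' h, ∑' k, |d k| * μ (k⁻¹ * h) :=
        Summable.tsum_le_tsum hptwise ((hd1'.sub hqn2.summable).abs) hswap.2.1
    _ = ∑' k, ∑' h, |d k| * μ (k⁻¹ * h) := hswap.2.2
    _ = ∑' k, |d k| := by
        refine tsum_congr fun k => ?_
        rw [tsum_mul_left, reindex_tsum k⁻¹ μ, hμ.tsum_eq, mul_one]
    _ = TV μ n g := rfl

lemma TV_mono (hμ : IsProbMeasure μ) (g : G) {N n : ℕ} (h : N ≤ n) :
    TV μ n g ≤ TV μ N g := by
  induction n, h using Nat.le_induction with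
  | base => exact le_refl _
  | succ n hn ih => exact le_trans (TV_antitone hμ n g) ih

end KV

open KV in
/-- Entropy criterion (Kaimanovich–Vershik, Derriennic, combined with the 0–2 law):
the asymptotic entropy `h(G,μ)` vanishes iff `‖g μ^{*n} − μ^{*(n+1)}‖ → 0` for every `g`
in the support of `μ`. -/
theorem asymptotic_entropy_zero_iff_tail_triviality
    {G : Type*} [Group G] [Countable G] (μ : G → ℝ)
    (hμ : IsProbMeasure μ) (hH : entropy μ < ⊤) :
    Tendsto (fun n : ℕ => (entropy (convPow μ n)).toReal / n) atTop (𝓝 0) ↔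
    ∀ g : G, 0 < μ g →
      Tendsto (fun n => ∑' h, |convPow μ n (g⁻¹ * h) - convPow μ (n + 1) h|) atTop (𝓝 0) := by
  have hHne : entropy μ ≠ ⊤ := hH.ne
  have hfun : (fun n : ℕ => (entropy (convPow μ n)).toReal / n)
      = fun n : ℕ => ((n : ℝ)⁻¹ * ∑ k ∈ Finset.range n, Ient μ k) := by
    funext n
    rw [Hsum_toReal hμ hHne n, Hsum_eq_range hμ hHne n, div_eq_inv_mul]
  have hTVfun : ∀ g : G, (fun n => ∑' h, |convPow μ n (g⁻¹ * h) - convPow μ (n + 1) h|)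
      = fun n => TV μ n g := fun g => rfl
  constructor
  · -- entropy criterion ⇒ TV convergence
    intro hLHS g hg
    rw [hTVfun g, Metric.tendsto_atTop]
    intro ε hε
    set s : ℝ := 1 + ε / 8 with hsdef
    have hs : 1 < s := by rw [hsdef]; linarith
    have hls : 0 < Real.log s := Real.log_pos hs
    set δ : ℝ := μ g * (Real.log s * (ε / 4)) with hδdef
    have hδ : 0 < δ := by positivity
    -- find N with small Ient
    have hex : ∃ N, Ient μ N < δ := by
      by_contra hc
      push_neg at hc
      have hfrac : ∀ n : ℕ, 1 ≤ n → δ ≤ Hsum μ n / n := by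
        intro n hn
        have hnpos : (0:ℝ) < n := by exact_mod_cast hn
        rw [le_div_iff₀ hnpos]
        calc δ * n = (n : ℝ) * δ := by ring
          _ = ∑ k ∈ Finset.range n, δ := by
              rw [Finset.sum_const, Finset.card_range, nsmul_eq_mul]
          _ ≤ ∑ k ∈ Finset.range n, Ient μ k := Finset.sum_le_sum fun k _ => hc k
          _ = Hsum μ n := (Hsum_eq_range hμ hHne n).symm
      have h1 := hLHS
      rw [Metric.tendsto_atTop] at h1
      obtain ⟨N0, hN0⟩ := h1 δ hδ
      have h2 := hN0 (max N0 1) (le_max_left _ _)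
      have h3 := hfrac (max N0 1) (le_max_right _ _)
      rw [Hsum_toReal hμ hHne, Real.dist_eq, sub_zero] at h2
      rw [abs_lt] at h2
      linarith [h2.2]
    obtain ⟨N, hN⟩ := hex
    refine ⟨N, fun n hn => ?_⟩
    have hD : Dg μ N g < Real.log s * (ε / 4) := by
      have h1 := mul_Dg_le_Ient hμ hHne N g
      have h2 : μ g * Dg μ N g < μ g * (Real.log s * (ε / 4)) := lt_of_le_of_lt h1 hN
      exact lt_of_mul_lt_mul_left h2 hg.le
    have hTVN : TV μ N g < ε := by
      have h1 := TV_le_Dg hμ hHne hg N hs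
      have h2 : Real.log s * TV μ N g < Real.log s * ε := by
        calc Real.log s * TV μ N g ≤ 2 * Dg μ N g + Real.log s * (2 * (s - 1)) := h1
          _ < 2 * (Real.log s * (ε / 4)) + Real.log s * (2 * (s - 1)) := by linarith [hD]
          _ = Real.log s * (ε / 2 + 2 * (s - 1)) := by ring
          _ ≤ Real.log s * (ε / 2 + ε / 4) := by
              refine mul_le_mul_of_nonneg_left ?_ hls.le
              rw [hsdef]; linarith
          _ < Real.log s * ε := by
              refine (mul_lt_mul_iff_right₀ hls).2 ?_; linarith
      exact lt_of_mul_lt_mul_left h2 hls.le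
    have h3 : TV μ n g ≤ TV μ N g := TV_mono hμ g hn
    rw [Real.dist_eq, sub_zero, abs_of_nonneg (TV_nonneg μ n g)]
    linarith
  · -- TV convergence ⇒ entropy criterion
    intro hRHS
    have hIto0 : Tendsto (fun n => Ient μ n) atTop (𝓝 0) := by
      have hlim : ∀ g : G, Tendsto (fun n => μ g * Dg μ n g) atTop (𝓝 (0:ℝ)) := by
        intro g
        rcases eq_or_lt_of_le (hμ.1 g) with h0g | h0g
        · have : (fun n => μ g * Dg μ n g) = fun _ => (0:ℝ) := by
            funext n; rw [← h0g, zero_mul]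
          rw [this]; exact tendsto_const_nhds
        · have hTV : Tendsto (fun n => TV μ n g) atTop (𝓝 0) := by
            rw [← hTVfun g]; exact hRHS g h0g
          have hub : ∀ n, μ g * Dg μ n g ≤ (μ g * (1 + Real.log (μ g)⁻¹)) * TV μ n g := by
            intro n
            have h1 := Dg_le_TV hμ hHne h0g n
            calc μ g * Dg μ n g ≤ μ g * ((1 + Real.log (μ g)⁻¹) * TV μ n g) :=
                  mul_le_mul_of_nonneg_left h1 h0g.le
              _ = (μ g * (1 + Real.log (μ g)⁻¹)) * TV μ n g := by ring
          have hlb : ∀ n, 0 ≤ μ g * Dg μ n g := fun n => mul_Dg_nonneg hμ n g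
          have hconst : Tendsto (fun n => (μ g * (1 + Real.log (μ g)⁻¹)) * TV μ n g)
              atTop (𝓝 0) := by
            have := hTV.const_mul (μ g * (1 + Real.log (μ g)⁻¹))
            simpa using this
          exact squeeze_zero hlb hub hconst
      have hbound : ∀ (n : ℕ) (g : G), ‖μ g * Dg μ n g‖ ≤ 2 * μ g + 2 * ent μ g := by
        intro n g
        rw [Real.norm_eq_abs, abs_of_nonneg (mul_Dg_nonneg hμ n g)]
        rcases eq_or_lt_of_le (hμ.1 g) with h0g | h0g
        · rw [← h0g, zero_mul]
          nlinarith [hμ.1 g, ent_nonneg hμ.1 hμ.le_one g]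
        · have hC0 : 0 ≤ 1 + Real.log (μ g)⁻¹ := by
            have : (1:ℝ) ≤ (μ g)⁻¹ := (one_le_inv₀ h0g).2 (hμ.le_one g)
            have := Real.log_nonneg this
            linarith
          have h1 := Dg_le_TV hμ hHne h0g n
          have h2 := TV_le_two hμ n g
          have h3 : Dg μ n g ≤ (1 + Real.log (μ g)⁻¹) * 2 := by
            calc Dg μ n g ≤ (1 + Real.log (μ g)⁻¹) * TV μ n g := h1
              _ ≤ (1 + Real.log (μ g)⁻¹) * 2 := mul_le_mul_of_nonneg_left h2 hC0
          have h4 : μ g * Dg μ n g ≤ μ g * ((1 + Real.log (μ g)⁻¹) * 2) :=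
            mul_le_mul_of_nonneg_left h3 h0g.le
          have h5 : μ g * ((1 + Real.log (μ g)⁻¹) * 2) = 2 * μ g + 2 * ent μ g := by
            have : Real.log (μ g)⁻¹ = -Real.log (μ g) := Real.log_inv _
            rw [this]
            show μ g * ((1 + -Real.log (μ g)) * 2) = 2 * μ g + 2 * -(μ g * Real.log (μ g))
            ring
          linarith
      have hsummable : Summable fun g => 2 * μ g + 2 * ent μ g :=
        (hμ.summable.mul_left 2).add (((entropy_ne_top_iff hμ).1 hHne).mul_left 2)
      have h6 := tendsto_tsum_of_dominated_convergence (𝓕 := atTop)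
        (f := fun n (g : G) => μ g * Dg μ n g) (g := fun _ => (0:ℝ))
        hsummable hlim (Filter.Eventually.of_forall hbound)
      rw [tsum_zero] at h6
      exact h6
    rw [hfun]
    have hC := hIto0.cesaro
    simpa using hC
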